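/- [Deterministic full-batch form of the main convergence theorem for AdaSAM.] Let d, N ≥ 1, let f₁, …, f_N : ℝ^d → ℝ be differentiable with ‖∇f_i(y)‖∞ ≤ G for all y and all i, set f = (1/N) Σ_{i=1}^N f_i, and assume each ∇f_i and ∇f are L-Lipschitz (L > 0) and that f(y) ≥ f* for all y ∈ ℝ^d. Let 0 < ε ≤ G, ρ ≥ 0, β₁ ∈ [0,1), β₂ ∈ [0,1], and 0 < γ ≤ ε/(16L). Given x₀ ∈ ℝ^d, define sequences recursively: s_t = ∇f(x_t), assumed nonzero for all t; g_t = (1/N) Σ_{i=1}^N ∇f_i(x_t + ρ s_t/‖s_t‖); m₀ = (1 − β₁) g₀ and m_{t+1} = β₁ m_t + (1 − β₁) g_{t+1}; v₀ = β₂ ε²·𝟙 + (1 − β₂) g₀ ⊙ g₀ and v_{t+1} = β₂ v_t + (1 − β₂) g_{t+1} ⊙ g_{t+1}; v̂₀ = coordinatewise max of ε²·𝟙 and v₀, and v̂_{t+1} = coordinatewise max of v̂_t and v_{t+1}; (η_t)_j = 1/√((v̂_t)_j); and x_{t+1} = x_t − γ (m_t ⊙ η_t). Then for every T ≥ 1: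 (1/T) Σ_{t=0}^{T−1} ‖∇f(x_t)‖² ≤ 2G(f(x₀) − f*)/(γT) + 45 G L² ρ²/ε + 8 G γ L³ ρ²/ε² + (2 G³ d/((1 − β₁) T)) (1/ε − 1/G) + 2(4 + (β₁/(1 − β₁))²) γ L G³ d (1/ε² − 1/G²)/T + 6 γ² L² β₁² d G³/((1 − β₁)² ε³). -/

import Mathlib

/-- The coordinatewise (Hadamard) product on `EuclideanSpace ℝ (Fin d)`. -/
noncomputable def had {d : ℕ} (x y : EuclideanSpace ℝ (Fin d)) : EuclideanSpace ℝ (Fin d) :=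
  (WithLp.equiv 2 (Fin d → ℝ)).symm (fun j => x j * y j)

/-!
The analysis runs along the heavy-ball shadow sequence `z_t = x_t + c (x_t - x_{t-1})`,
`c = β₁ / (1 - β₁)`, on which the momentum cancels:
`z_{t+1} - z_t = -γ g_t ⊙ η_t - γ c m_{t-1} ⊙ (η_t - η_{t-1})`.
The descent lemma at `z_t`, with `⟪∇f(x_t), g_t ⊙ η_t⟫` expanded by polarisation in the
`η_t`-weighted inner product, gives a decrease of `(γ/2) ∑_j ∇f(x_t)_j² (η_t)_j` per step up to
three errors: the SAM bias `‖g_t - ∇f(x_t)‖ ≤ Lρ`, the gap `‖z_t - x_t‖ ≤ γ c √d G / ε`, and the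
decrease `∑_j ((η_{t-1})_j - (η_t)_j)` of the AMSGrad step sizes, which telescopes because `η_t`
is nonincreasing with values in `[1/G, 1/ε]`. Summing over `t` and using `η_t ≥ 1/G` gives the
bound.
-/

open Finset

@[simp]
lemma had_apply {d : ℕ} (x y : EuclideanSpace ℝ (Fin d)) (j : Fin d) : had x y j = x j * y j :=
  rfl

lemma real_inner_eq_sum_mul {d : ℕ} (u v : EuclideanSpace ℝ (Fin d)) :
    inner ℝ u v = ∑ j, u j * v j := by
  simp [PiLp.inner_apply, mul_comm]

lemma norm_avg_le {E : Type*} [SeminormedAddCommGroup E] [NormedSpace ℝ E] {n : ℕ}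
    {u : Fin n → E} {B : ℝ} (hB : 0 ≤ B) (hu : ∀ i, ‖u i‖ ≤ B) :
    ‖(1 / (n : ℝ)) • ∑ i, u i‖ ≤ B := by
  rcases n.eq_zero_or_pos with rfl | hn
  · simpa using hB
  rw [norm_smul, one_div, norm_inv, Real.norm_natCast, inv_mul_le_iff₀ (by positivity)]
  simpa using norm_sum_le_of_le univ fun i _ => hu i

lemma abs_avg_apply_le {d n : ℕ} {u : Fin n → EuclideanSpace ℝ (Fin d)} {j : Fin d} {B : ℝ}
    (hB : 0 ≤ B) (hu : ∀ i, |u i j| ≤ B) : |((1 / (n : ℝ)) • ∑ i, u i) j| ≤ B := by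
  simpa using norm_avg_le (u := (u · j)) hB hu

lemma abs_ema_le {u w : ℕ → ℝ} {u₀ β B : ℝ} (hβ : β ∈ Set.Icc 0 1) (hu₀ : |u₀| ≤ B)
    (hw : ∀ t, |w t| ≤ B) (h0 : u 0 = β * u₀ + (1 - β) * w 0)
    (hs : ∀ t, u (t + 1) = β * u t + (1 - β) * w (t + 1)) (t : ℕ) : |u t| ≤ B := by
  have step : ∀ a s, |a| ≤ B → |β * a + (1 - β) * w s| ≤ B := fun a s ha => by
    refine (abs_add_le _ _).trans ?_
    rw [abs_mul, abs_mul, abs_of_nonneg hβ.1, abs_of_nonneg (sub_nonneg.2 hβ.2)]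
    nlinarith [hw s, hβ.1, hβ.2]
  induction t with
  | zero => rw [h0]; exact step _ _ hu₀
  | succ t ih => rw [hs]; exact step _ _ ih

lemma running_max_mem_Icc {v vhat : ℕ → ℝ} {a b : ℝ} (hab : a ≤ b) (hv : ∀ t, v t ≤ b)
    (h0 : vhat 0 = max a (v 0)) (hs : ∀ t, vhat (t + 1) = max (vhat t) (v (t + 1))) (t : ℕ) :
    vhat t ∈ Set.Icc a b := by
  induction t with
  | zero => rw [h0]; exact ⟨le_max_left _ _, max_le hab (hv 0)⟩
  | succ t ih => rw [hs]; exact ⟨ih.1.trans (le_max_left _ _), max_le ih.2 (hv _)⟩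

lemma one_div_sqrt_mem_Icc {a ε G : ℝ} (hε : 0 < ε) (hG : 0 ≤ G)
    (ha : a ∈ Set.Icc (ε ^ 2) (G ^ 2)) : 1 / √a ∈ Set.Icc (1 / G) (1 / ε) := by
  have hεa : ε ≤ √a := Real.le_sqrt_of_sq_le ha.1
  exact ⟨one_div_le_one_div_of_le (hε.trans_le hεa) (Real.sqrt_le_left hG |>.mpr ha.2),
    one_div_le_one_div_of_le hε hεa⟩

lemma amsgrad_stepsize_bounds {g v vhat η : ℕ → ℝ} {β₂ ε G : ℝ} (hβ₂ : β₂ ∈ Set.Icc 0 1)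
    (hε : 0 < ε) (hεG : ε ≤ G) (hg : ∀ t, |g t| ≤ G)
    (hv0 : v 0 = β₂ * ε ^ 2 + (1 - β₂) * (g 0 * g 0))
    (hv : ∀ t, v (t + 1) = β₂ * v t + (1 - β₂) * (g (t + 1) * g (t + 1)))
    (hvhat0 : vhat 0 = max (ε ^ 2) (v 0)) (hvhat : ∀ t, vhat (t + 1) = max (vhat t) (v (t + 1)))
    (hη : ∀ t, η t = 1 / √(vhat t)) :
    (∀ t, η t ∈ Set.Icc (1 / G) (1 / ε)) ∧ Antitone η := by
  have hG : 0 ≤ G := hε.le.trans hεG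
  have hε2 : ε ^ 2 ≤ G ^ 2 := pow_le_pow_left₀ hε.le hεG 2
  have hvG : ∀ t, v t ≤ G ^ 2 := fun t =>
    (le_abs_self _).trans <| abs_ema_le hβ₂ (by rwa [abs_of_nonneg (sq_nonneg ε)])
      (fun t => by rw [abs_mul, sq]; exact mul_le_mul (hg t) (hg t) (abs_nonneg _) hG) hv0 hv t
  have hvhatI := running_max_mem_Icc hε2 hvG hvhat0 hvhat
  refine ⟨fun t => hη t ▸ one_div_sqrt_mem_Icc hε hG (hvhatI t),
    antitone_nat_of_succ_le fun t => ?_⟩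
  rw [hη, hη, hvhat]
  exact one_div_le_one_div_of_le (Real.sqrt_pos.2 ((pow_pos hε 2).trans_le (hvhatI t).1))
    (Real.sqrt_le_sqrt (le_max_left _ _))

lemma mul_le_sq_div_add_mul_sq {a b ε : ℝ} (hε : 0 < ε) :
    a * b ≤ a ^ 2 / ε + ε / 4 * b ^ 2 := by
  have hsq : 0 ≤ (a - ε * b / 2) ^ 2 / ε := by positivity
  have e : (a - ε * b / 2) ^ 2 / ε = a ^ 2 / ε + ε / 4 * b ^ 2 - a * b := by
    field_simp
    ring
  linarith

lemma norm_sub_sq_le {E : Type*} [SeminormedAddCommGroup E] (u v : E) :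
    ‖u - v‖ ^ 2 ≤ 2 * ‖u‖ ^ 2 + 2 * ‖v‖ ^ 2 := by
  have := pow_le_pow_left₀ (norm_nonneg _) (norm_sub_le u v) 2
  linarith [sq_nonneg (‖u‖ - ‖v‖)]

-- `delay a u t = u (t - 1)`, with `a` standing for `u (-1)`.
def delay {α : Type*} (a : α) (u : ℕ → α) : ℕ → α
  | 0 => a
  | t + 1 => u t

@[simp]
lemma delay_zero {α : Type*} (a : α) (u : ℕ → α) : delay a u 0 = a :=
  rfl

@[simp]
lemma delay_succ {α : Type*} (a : α) (u : ℕ → α) (t : ℕ) : delay a u (t + 1) = u t :=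
  rfl

lemma sum_range_delay_sub {α : Type*} [AddCommGroup α] (u : ℕ → α) (T : ℕ) :
    ∑ t ∈ range (T + 1), (delay (u 0) u t - u t) = u 0 - u T := by
  rw [sum_range_succ', delay_zero, sub_self, add_zero]
  exact sum_range_sub' u T

section SmoothFunctions

variable {F : Type*} [NormedAddCommGroup F] [InnerProductSpace ℝ F] [CompleteSpace F]

lemma gradient_avg {n : ℕ} {fi : Fin n → F → ℝ} {f : F → ℝ}
    (hfdef : ∀ y, f y = (1 / (n : ℝ)) * ∑ i, fi i y) (hfi : ∀ i, Differentiable ℝ (fi i))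
    (y : F) : gradient f y = (1 / (n : ℝ)) • ∑ i, gradient (fi i) y := by
  have hsum : HasFDerivAt (fun y => ∑ i, fi i y)
      (∑ i, InnerProductSpace.toDual ℝ F (gradient (fi i) y)) y :=
    HasFDerivAt.fun_sum fun i _ => hasGradientAt_iff_hasFDerivAt.mp (hfi i y).hasGradientAt
  refine HasGradientAt.gradient ?_
  rw [hasGradientAt_iff_hasFDerivAt, map_smul, map_sum, funext hfdef]
  exact hsum.const_mul _

lemma descent_lemma {f : F → ℝ} {L : ℝ} (hf : Differentiable ℝ f)
    (hfL : ∀ u v, ‖gradient f u - gradient f v‖ ≤ L * ‖u - v‖) (a δ : F) :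
    f (a + δ) ≤ f a + inner ℝ (gradient f a) δ + L / 2 * ‖δ‖ ^ 2 := by
  set ψ : ℝ → ℝ := fun θ =>
    f (a + θ • δ) - θ * inner ℝ (gradient f a) δ - L / 2 * θ ^ 2 * ‖δ‖ ^ 2
  have hψ : ∀ θ, HasDerivAt ψ
      (inner ℝ (gradient f (a + θ • δ) - gradient f a) δ - L * θ * ‖δ‖ ^ 2) θ := by
    intro θ
    have hline : HasDerivAt (fun θ : ℝ => a + θ • δ) δ θ := by
      simpa using ((hasDerivAt_id θ).smul_const δ).const_add a
    have hfθ := (hf (a + θ • δ)).hasGradientAt.hasFDerivAt.comp_hasDerivAt θ hline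
    refine ((hfθ.sub ((hasDerivAt_id θ).mul_const (inner ℝ (gradient f a) δ))).sub
      (((hasDerivAt_pow 2 θ).const_mul (L / 2)).mul_const (‖δ‖ ^ 2))).congr_deriv ?_
    simp only [InnerProductSpace.toDual_apply_apply, inner_sub_left, one_mul]
    push_cast
    ring
  have hanti : AntitoneOn ψ (Set.Icc 0 1) := by
    refine antitoneOn_of_deriv_nonpos (convex_Icc 0 1)
      (fun θ _ => (hψ θ).continuousAt.continuousWithinAt)
      (fun θ _ => (hψ θ).differentiableAt.differentiableWithinAt) fun θ hθ => ?_
    rw [interior_Icc] at hθ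
    rw [(hψ θ).deriv, sub_nonpos]
    calc inner ℝ (gradient f (a + θ • δ) - gradient f a) δ
        ≤ ‖gradient f (a + θ • δ) - gradient f a‖ * ‖δ‖ := real_inner_le_norm _ _
      _ ≤ L * ‖(a + θ • δ) - a‖ * ‖δ‖ := by gcongr; exact hfL _ _
      _ = L * θ * ‖δ‖ ^ 2 := by
        rw [add_sub_cancel_left, norm_smul, Real.norm_of_nonneg hθ.1.le]; ring
  have h01 := hanti (Set.left_mem_Icc.mpr zero_le_one) (Set.right_mem_Icc.mpr zero_le_one)
    zero_le_one
  norm_num [ψ, -inner_gradient_left] at h01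
  linarith

lemma norm_avg_gradient_perturbed_sub_le {n : ℕ} {fi : Fin n → F → ℝ} {L ρ : ℝ} (hL : 0 ≤ L)
    (hρ : 0 ≤ ρ) (hfiL : ∀ i u v, ‖gradient (fi i) u - gradient (fi i) v‖ ≤ L * ‖u - v‖)
    {s : F} (hs : s ≠ 0) (y : F) :
    ‖(1 / (n : ℝ)) • ∑ i, gradient (fi i) (y + (ρ / ‖s‖) • s)
      - (1 / (n : ℝ)) • ∑ i, gradient (fi i) y‖ ≤ L * ρ := by
  rw [← smul_sub, ← sum_sub_distrib]
  refine norm_avg_le (mul_nonneg hL hρ) fun i => (hfiL i _ _).trans_eq ?_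
  rw [add_sub_cancel_left, norm_smul, norm_div, Real.norm_of_nonneg hρ, norm_norm,
    div_mul_cancel₀ _ (norm_ne_zero_iff.mpr hs)]

end SmoothFunctions

section Momentum

variable {d : ℕ} {x m g η : ℕ → EuclideanSpace ℝ (Fin d)} {β γ c : ℝ}

lemma sub_delay_eq_of_step (hx : ∀ t, x (t + 1) = x t - γ • had (m t) (η t)) (t : ℕ) :
    x t - delay (x 0) x t = -(γ • had (delay 0 m t) (delay (η 0) η t)) := by
  cases t with
  | zero => ext j; simp
  | succ t => rw [hx t]; simp

lemma eq_smul_delay_add_smul (hm0 : m 0 = (1 - β) • g 0)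
    (hm : ∀ t, m (t + 1) = β • m t + (1 - β) • g (t + 1)) (t : ℕ) :
    m t = β • delay 0 m t + (1 - β) • g t := by
  cases t with
  | zero => simp [hm0]
  | succ t => exact hm t

def momentumShadow (c : ℝ) (x : ℕ → EuclideanSpace ℝ (Fin d)) (t : ℕ) :
    EuclideanSpace ℝ (Fin d) :=
  x t + c • (x t - delay (x 0) x t)

lemma momentumShadow_sub (hx : ∀ t, x (t + 1) = x t - γ • had (m t) (η t)) (t : ℕ) :
    momentumShadow c x t - x t = -((γ * c) • had (delay 0 m t) (delay (η 0) η t)) := by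
  rw [momentumShadow, add_sub_cancel_left, sub_delay_eq_of_step hx, smul_neg, mul_comm,
    mul_smul]

lemma momentumShadow_succ_sub (hc : c * (1 - β) = β)
    (hx : ∀ t, x (t + 1) = x t - γ • had (m t) (η t)) (hm0 : m 0 = (1 - β) • g 0)
    (hm : ∀ t, m (t + 1) = β • m t + (1 - β) • g (t + 1)) (t : ℕ) :
    momentumShadow c x (t + 1) - momentumShadow c x t =
      -(γ • had (g t) (η t)) - (γ * c) • had (delay 0 m t) (η t - delay (η 0) η t) := by
  have hstep := sub_delay_eq_of_step hx (t + 1)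
  have hprev := sub_delay_eq_of_step hx t
  have hmt := eq_smul_delay_add_smul hm0 hm t
  rw [delay_succ] at hstep
  ext j
  have h1 := congrArg (· j) hstep
  have h2 := congrArg (· j) hprev
  have h3 := congrArg (· j) hmt
  simp only [momentumShadow, delay_succ, PiLp.sub_apply, PiLp.add_apply, PiLp.smul_apply,
    PiLp.neg_apply, had_apply, smul_eq_mul] at h1 h2 h3 ⊢
  linear_combination (1 + c) * h1 - c * h2 - γ * (1 + c) * η t j * h3
    + γ * (delay 0 m t j * η t j - g t j * η t j) * hc

end Momentum

section WeightedSums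

variable {d : ℕ}

lemma two_mul_inner_had_eq (a g η : EuclideanSpace ℝ (Fin d)) :
    2 * inner ℝ a (had g η)
      = ∑ j, a j ^ 2 * η j + ∑ j, g j ^ 2 * η j - ∑ j, (g j - a j) ^ 2 * η j := by
  rw [real_inner_eq_sum_mul, mul_sum, ← sum_add_distrib, ← sum_sub_distrib]
  exact sum_congr rfl fun j _ => by rw [had_apply]; ring

lemma sum_sq_mul_le_mul_norm_sq {u η : EuclideanSpace ℝ (Fin d)} {B : ℝ}
    (hη : ∀ j, η j ≤ B) : ∑ j, u j ^ 2 * η j ≤ B * ‖u‖ ^ 2 := by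
  rw [EuclideanSpace.real_norm_sq_eq, mul_sum]
  exact sum_le_sum fun j _ => by nlinarith [sq_nonneg (u j), hη j]

lemma norm_had_sq_le_mul_sum {g η : EuclideanSpace ℝ (Fin d)} {B : ℝ}
    (hη : ∀ j, 0 ≤ η j) (hηB : ∀ j, η j ≤ B) :
    ‖had g η‖ ^ 2 ≤ B * ∑ j, g j ^ 2 * η j := by
  rw [EuclideanSpace.real_norm_sq_eq, mul_sum]
  exact sum_le_sum fun j _ => by
    rw [had_apply]; nlinarith [mul_nonneg (sq_nonneg (g j)) (hη j), hηB j]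

lemma sq_norm_le_mul_sum {a η : EuclideanSpace ℝ (Fin d)} {G : ℝ} (hG : 0 < G)
    (hη : ∀ j, 1 / G ≤ η j) : ‖a‖ ^ 2 ≤ G * ∑ j, a j ^ 2 * η j := by
  rw [EuclideanSpace.real_norm_sq_eq, mul_sum]
  refine sum_le_sum fun j _ => ?_
  have : 1 ≤ G * η j := by rw [← div_le_iff₀' hG]; exact hη j
  nlinarith [sq_nonneg (a j)]

lemma norm_had_sq_le {u w : EuclideanSpace ℝ (Fin d)} {A B : ℝ} (hu : ∀ j, |u j| ≤ A)
    (hw : ∀ j, |w j| ≤ B) : ‖had u w‖ ^ 2 ≤ d * (A * B) ^ 2 := by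
  rw [EuclideanSpace.real_norm_sq_eq]
  calc ∑ j, had u w j ^ 2 ≤ ∑ _j : Fin d, (A * B) ^ 2 := sum_le_sum fun j _ => by
        rw [had_apply, ← sq_abs, abs_mul]
        exact pow_le_pow_left₀ (by positivity)
          (mul_le_mul (hu j) (hw j) (abs_nonneg _) ((abs_nonneg _).trans (hu j))) 2
    _ = d * (A * B) ^ 2 := by simp

lemma neg_inner_had_sub_le {u M η H : EuclideanSpace ℝ (Fin d)} {G : ℝ}
    (hu : ∀ j, |u j| ≤ G) (hM : ∀ j, |M j| ≤ G) (hηH : ∀ j, η j ≤ H j) :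
    -inner ℝ u (had M (η - H)) ≤ G ^ 2 * ∑ j, (H j - η j) := by
  rw [real_inner_eq_sum_mul, ← sum_neg_distrib, mul_sum]
  refine sum_le_sum fun j _ => ?_
  have huM : u j * M j ≤ G ^ 2 := by
    rw [sq]
    exact (le_abs_self _).trans (by
      rw [abs_mul]; exact mul_le_mul (hu j) (hM j) (abs_nonneg _) ((abs_nonneg _).trans (hu j)))
  simp only [had_apply, PiLp.sub_apply]
  nlinarith [sub_nonneg.2 (hηH j)]

lemma norm_had_sub_sq_le {M η H : EuclideanSpace ℝ (Fin d)} {G B : ℝ}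
    (hM : ∀ j, |M j| ≤ G) (hη : ∀ j, 0 ≤ η j) (hηH : ∀ j, η j ≤ H j) (hH : ∀ j, H j ≤ B) :
    ‖had M (η - H)‖ ^ 2 ≤ G ^ 2 * B * ∑ j, (H j - η j) := by
  rw [EuclideanSpace.real_norm_sq_eq, mul_sum]
  refine sum_le_sum fun j _ => ?_
  have hM2 : M j ^ 2 ≤ G ^ 2 := sq_le_sq' (abs_le.1 (hM j)).1 (abs_le.1 (hM j)).2
  have hgap : (η j - H j) ^ 2 ≤ B * (H j - η j) := by
    nlinarith [sub_nonneg.2 (hηH j), hη j, hH j]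
  simp only [had_apply, PiLp.sub_apply, mul_pow]
  calc M j ^ 2 * (η j - H j) ^ 2 ≤ G ^ 2 * (B * (H j - η j)) :=
        mul_le_mul hM2 hgap (sq_nonneg _) (sq_nonneg _)
    _ = G ^ 2 * B * (H j - η j) := by ring

end WeightedSums

lemma preconditioned_descent_step {d : ℕ} {f : EuclideanSpace ℝ (Fin d) → ℝ} {L G ε γ c δ r : ℝ}
    (hf : Differentiable ℝ f) (hfL : ∀ u v, ‖gradient f u - gradient f v‖ ≤ L * ‖u - v‖)
    (hfG : ∀ y j, |gradient f y j| ≤ G) (hL : 0 ≤ L) (hε : 0 < ε) (hγ : 0 ≤ γ) (hc : 0 ≤ c)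
    (hLγ : L * γ ≤ ε / 16) {x z z' g M η H : EuclideanSpace ℝ (Fin d)}
    (hM : ∀ j, |M j| ≤ G) (hη : ∀ j, 0 ≤ η j) (hηH : ∀ j, η j ≤ H j) (hH : ∀ j, H j ≤ 1 / ε)
    (hz : z' - z = -(γ • had g η) - (γ * c) • had M (η - H))
    (hgδ : ‖g - gradient f x‖ ≤ δ) (hzx : ‖z - x‖ ^ 2 ≤ r) :
    γ / 2 * ∑ j, gradient f x j ^ 2 * η j
      ≤ f z - f z' + (γ * δ ^ 2 / (2 * ε) + γ * L ^ 2 * r / ε)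
        + γ * c * G ^ 2 * (1 + L * γ * c / ε) * ∑ j, (H j - η j) := by
  set a := gradient f x
  set w := gradient f z - a
  set p := had g η
  set q := had M (η - H)
  set S := ∑ j, a j ^ 2 * η j
  set Q := ∑ j, g j ^ 2 * η j
  set E := ∑ j, (g j - a j) ^ 2 * η j
  set P := ∑ j, (H j - η j)
  have hηε : ∀ j, η j ≤ 1 / ε := fun j => (hηH j).trans (hH j)
  have hdesc := descent_lemma hf hfL z (z' - z)
  rw [add_sub_cancel] at hdesc
  have hinner : inner ℝ (gradient f z) (z' - z)
      = -γ * inner ℝ a p - γ * inner ℝ w p - γ * c * inner ℝ (gradient f z) q := by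
    rw [hz, show gradient f z = a + w by simp only [w, add_sub_cancel]]
    simp only [inner_sub_right, inner_neg_right, inner_smul_right, inner_add_left]
    ring
  have hpol : γ * inner ℝ a p = γ / 2 * (S + Q - E) := by
    linear_combination γ / 2 * two_mul_inner_had_eq a g η
  have hE : E ≤ δ ^ 2 / ε :=
    calc E ≤ 1 / ε * ‖g - a‖ ^ 2 := by simpa using sum_sq_mul_le_mul_norm_sq (u := g - a) hηε
      _ ≤ 1 / ε * δ ^ 2 := by gcongr
      _ = δ ^ 2 / ε := by ring
  have hw : ‖w‖ ^ 2 ≤ L ^ 2 * r :=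
    calc ‖w‖ ^ 2 ≤ (L * ‖z - x‖) ^ 2 := by gcongr; exact hfL z x
      _ = L ^ 2 * ‖z - x‖ ^ 2 := by ring
      _ ≤ L ^ 2 * r := by gcongr
  have hp : ε * ‖p‖ ^ 2 ≤ Q := by
    have := norm_had_sq_le_mul_sum (g := g) hη hηε
    rwa [one_div_mul_eq_div, le_div_iff₀' hε] at this
  have hwp : -inner ℝ w p ≤ ‖w‖ ^ 2 / ε + ε / 4 * ‖p‖ ^ 2 := by
    have hcs := real_inner_le_norm (-w) p
    rw [inner_neg_left, norm_neg] at hcs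
    exact hcs.trans (mul_le_sq_div_add_mul_sq hε)
  have hq : -inner ℝ (gradient f z) q ≤ G ^ 2 * P := neg_inner_had_sub_le (hfG z) hM hηH
  have hq2 : ‖q‖ ^ 2 ≤ G ^ 2 * (1 / ε) * P := norm_had_sub_sq_le hM hη hηH hH
  have hstep : ‖z' - z‖ ^ 2 ≤ 2 * γ ^ 2 * ‖p‖ ^ 2 + 2 * (γ * c) ^ 2 * ‖q‖ ^ 2 := by
    rw [hz]
    refine (norm_sub_sq_le _ _).trans_eq ?_
    rw [norm_neg, norm_smul, norm_smul, Real.norm_of_nonneg hγ,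
      Real.norm_of_nonneg (mul_nonneg hγ hc)]
    ring
  have hQ : 0 ≤ Q := sum_nonneg fun j _ => mul_nonneg (sq_nonneg _) (hη j)
  -- Polarisation leaves `-γ/2 ∑ g_j² η_j`, which absorbs the `‖g ⊙ η‖²` terms since
  -- `ε ‖g ⊙ η‖² ≤ ∑ g_j² η_j` and `L γ ≤ ε / 16`.
  linear_combination hdesc + hinner - hpol + γ * hwp + γ / ε * hw + γ * c * hq + L / 2 * hstep
    + L * (γ * c) ^ 2 * hq2 + γ / 2 * hE + γ * ‖p‖ ^ 2 * hLγ + 5 * γ / 16 * hp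
    + 3 / 16 * mul_nonneg hγ hQ

lemma sum_sum_delay_sub_le {d : ℕ} {η : ℕ → EuclideanSpace ℝ (Fin d)} {a b : ℝ}
    (hη : ∀ t j, η t j ∈ Set.Icc a b) {T : ℕ} (hT : 0 < T) :
    ∑ t ∈ range T, ∑ j, (delay (η 0) η t j - η t j) ≤ d * (b - a) := by
  obtain ⟨T, rfl⟩ := Nat.exists_eq_add_one_of_ne_zero hT.ne'
  rw [sum_comm]
  calc ∑ j, ∑ t ∈ range (T + 1), (delay (η 0) η t j - η t j) = ∑ j, (η 0 j - η T j) :=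
        sum_congr rfl fun j _ => by simpa using congrArg (· j) (sum_range_delay_sub η T)
    _ ≤ ∑ _j : Fin d, (b - a) := sum_le_sum fun j _ => sub_le_sub (hη 0 j).2 (hη T j).1
    _ = d * (b - a) := by simp [mul_sub]

lemma mul_sum_le_of_le_sub_add {S F P : ℕ → ℝ} {a C D K fstar : ℝ} (hD : 0 ≤ D)
    (hstep : ∀ t, a * S t ≤ F t - F (t + 1) + C + D * P t) (hF : ∀ t, fstar ≤ F t) {T : ℕ}
    (hP : ∑ t ∈ range T, P t ≤ K) :
    a * ∑ t ∈ range T, S t ≤ F 0 - fstar + T * C + D * K := by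
  have hsum := sum_le_sum fun t (_ : t ∈ range T) => hstep t
  rw [← mul_sum, sum_add_distrib, sum_add_distrib, sum_range_sub', sum_const, card_range,
    nsmul_eq_mul, ← mul_sum] at hsum
  linear_combination hsum + hF T + D * hP

theorem adaptive_momentum_convergence {d : ℕ} {f : EuclideanSpace ℝ (Fin d) → ℝ}
    {L G ε β γ δ fstar : ℝ} (hf : Differentiable ℝ f)
    (hfL : ∀ u v, ‖gradient f u - gradient f v‖ ≤ L * ‖u - v‖)
    (hfG : ∀ y j, |gradient f y j| ≤ G) (hlb : ∀ y, fstar ≤ f y) (hL : 0 ≤ L) (hG : 0 < G)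
    (hε : 0 < ε) (hβ : β ∈ Set.Ico 0 1) (hγ : 0 < γ) (hLγ : L * γ ≤ ε / 16)
    {x g m η : ℕ → EuclideanSpace ℝ (Fin d)} (hgG : ∀ t j, |g t j| ≤ G)
    (hgδ : ∀ t, ‖g t - gradient f (x t)‖ ≤ δ) (hη : ∀ t j, η t j ∈ Set.Icc (1 / G) (1 / ε))
    (hηanti : ∀ j, Antitone (η · j)) (hm0 : m 0 = (1 - β) • g 0)
    (hm : ∀ t, m (t + 1) = β • m t + (1 - β) • g (t + 1))
    (hx : ∀ t, x (t + 1) = x t - γ • had (m t) (η t)) {T : ℕ} (hT : 0 < T) :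
    (1 / (T : ℝ)) * ∑ t ∈ range T, ‖gradient f (x t)‖ ^ 2 ≤
      2 * G * (f (x 0) - fstar) / (γ * T) + G * δ ^ 2 / ε
        + 2 * (β / (1 - β)) ^ 2 * γ ^ 2 * L ^ 2 * d * G ^ 3 / ε ^ 3
        + 2 * (β / (1 - β)) * G ^ 3 * d * (1 / ε - 1 / G) * (1 + L * γ * (β / (1 - β)) / ε)
          / T := by
  obtain ⟨hβ0, hβ1⟩ := hβ
  set c := β / (1 - β)
  have hc : c * (1 - β) = β := div_mul_cancel₀ _ (sub_ne_zero.2 hβ1.ne')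
  have hc0 : 0 ≤ c := div_nonneg hβ0 (sub_nonneg.2 hβ1.le)
  have hη0 : ∀ t j, 0 ≤ η t j := fun t j => (one_div_pos.2 hG).le.trans (hη t j).1
  have hM : ∀ t j, |delay 0 m t j| ≤ G := by
    rintro (_ | t) j
    · simpa using hG.le
    · exact abs_ema_le (u := (m · j)) ⟨hβ0, hβ1.le⟩ (abs_zero.trans_le hG.le) (hgG · j)
        (by simp [hm0]) (fun t => by simp [hm]) t
  have hH : ∀ t j, η t j ≤ delay (η 0) η t j ∧ delay (η 0) η t j ≤ 1 / ε := by
    rintro (_ | t) j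
    · exact ⟨le_rfl, (hη 0 j).2⟩
    · exact ⟨hηanti j t.le_succ, (hη t j).2⟩
  have hzx : ∀ t,
      ‖momentumShadow c x t - x t‖ ^ 2 ≤ (γ * c) ^ 2 * (d * (G * (1 / ε)) ^ 2) := by
    intro t
    rw [momentumShadow_sub hx, norm_neg, norm_smul, mul_pow,
      Real.norm_of_nonneg (by positivity)]
    gcongr
    refine norm_had_sq_le (hM t) fun j => abs_le.2 ⟨?_, (hH t j).2⟩
    linarith [hη0 t j, (hH t j).1, one_div_pos.2 hε]
  have hsum := mul_sum_le_of_le_sub_add (by positivity)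
    (fun t => preconditioned_descent_step hf hfL hfG hL hε hγ.le hc0 hLγ (hM t) (hη0 t)
      (fun j => (hH t j).1) (fun j => (hH t j).2) (momentumShadow_succ_sub hc hx hm0 hm t) (hgδ t) (hzx t))
    (fun t => hlb _) (sum_sum_delay_sub_le hη hT)
  have hS : ∑ t ∈ range T, ‖gradient f (x t)‖ ^ 2
      ≤ G * ∑ t ∈ range T, ∑ j, gradient f (x t) j ^ 2 * η t j := by
    rw [mul_sum]
    exact sum_le_sum fun t _ => sq_norm_le_mul_sum hG fun j => (hη t j).1
  have hT' : (0 : ℝ) < T := by exact_mod_cast hT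
  rw [show momentumShadow c x 0 = x 0 by simp [momentumShadow]] at hsum
  calc (1 / (T : ℝ)) * ∑ t ∈ range T, ‖gradient f (x t)‖ ^ 2
      ≤ (1 / T) * (G * ∑ t ∈ range T, ∑ j, gradient f (x t) j ^ 2 * η t j) := by gcongr
    _ ≤ (1 / T) * (G * (2 / γ * (f (x 0) - fstar + T * (γ * δ ^ 2 / (2 * ε)
          + γ * L ^ 2 * ((γ * c) ^ 2 * (d * (G * (1 / ε)) ^ 2)) / ε)
          + γ * c * G ^ 2 * (1 + L * γ * c / ε) * (d * (1 / ε - 1 / G))))) := by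
      gcongr
      rw [div_mul_eq_mul_div, le_div_iff₀ hγ]
      linarith
    _ = _ := by field_simp; ring

lemma adasam_error_terms_le {d T : ℕ} {L G ε ρ β γ : ℝ} (hL : 0 < L) (hε : 0 < ε) (hεG : ε ≤ G)
    (hβ : β ∈ Set.Ico 0 1) (hγ : 0 < γ) (hT : 0 < T) :
    G * (L * ρ) ^ 2 / ε + 2 * (β / (1 - β)) ^ 2 * γ ^ 2 * L ^ 2 * d * G ^ 3 / ε ^ 3
        + 2 * (β / (1 - β)) * G ^ 3 * d * (1 / ε - 1 / G) * (1 + L * γ * (β / (1 - β)) / ε)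
          / T
      ≤ 45 * G * L ^ 2 * ρ ^ 2 / ε + 8 * G * γ * L ^ 3 * ρ ^ 2 / ε ^ 2
        + (2 * G ^ 3 * (d : ℝ) / ((1 - β) * T)) * (1 / ε - 1 / G)
        + 2 * (4 + (β / (1 - β)) ^ 2) * γ * L * G ^ 3 * (d : ℝ) * (1 / ε ^ 2 - 1 / G ^ 2) / T
        + 6 * γ ^ 2 * L ^ 2 * β ^ 2 * (d : ℝ) * G ^ 3 / ((1 - β) ^ 2 * ε ^ 3) := by
  obtain ⟨hβ0, hβ1⟩ := hβ
  have hG : 0 < G := hε.trans_le hεG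
  have h1β : 0 < 1 - β := sub_pos.2 hβ1
  have hT' : (0 : ℝ) < T := by exact_mod_cast hT
  have hc : β / (1 - β) ≤ 1 / (1 - β) := div_le_div_of_nonneg_right (by linarith) h1β.le
  have hK : 0 ≤ 1 / ε - 1 / G := sub_nonneg.2 (one_div_le_one_div_of_le hε hεG)
  have hKε : (1 / ε - 1 / G) / ε ≤ 1 / ε ^ 2 - 1 / G ^ 2 := by
    have : 1 / G ^ 2 ≤ 1 / (G * ε) :=
      one_div_le_one_div_of_le (by positivity) (by rw [sq]; gcongr)
    calc (1 / ε - 1 / G) / ε = 1 / ε ^ 2 - 1 / (G * ε) := by field_simp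
      _ ≤ 1 / ε ^ 2 - 1 / G ^ 2 := by linarith
  have t1 : G * (L * ρ) ^ 2 / ε ≤ 45 * G * L ^ 2 * ρ ^ 2 / ε :=
    calc G * (L * ρ) ^ 2 / ε = 1 * (G * L ^ 2 * ρ ^ 2 / ε) := by ring
      _ ≤ 45 * (G * L ^ 2 * ρ ^ 2 / ε) := by gcongr; norm_num
      _ = 45 * G * L ^ 2 * ρ ^ 2 / ε := by ring
  have t2 : 2 * (β / (1 - β)) ^ 2 * γ ^ 2 * L ^ 2 * d * G ^ 3 / ε ^ 3
      ≤ 6 * γ ^ 2 * L ^ 2 * β ^ 2 * (d : ℝ) * G ^ 3 / ((1 - β) ^ 2 * ε ^ 3) :=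
    calc _ = 2 * (γ ^ 2 * L ^ 2 * β ^ 2 * d * G ^ 3 / ((1 - β) ^ 2 * ε ^ 3)) := by
          field_simp
      _ ≤ 6 * (γ ^ 2 * L ^ 2 * β ^ 2 * d * G ^ 3 / ((1 - β) ^ 2 * ε ^ 3)) := by
        gcongr; norm_num
      _ = _ := by ring
  have t3 : 2 * (β / (1 - β)) * G ^ 3 * d * (1 / ε - 1 / G)
        * (1 + L * γ * (β / (1 - β)) / ε) / T
      ≤ (2 * G ^ 3 * (d : ℝ) / ((1 - β) * T)) * (1 / ε - 1 / G)
        + 2 * (4 + (β / (1 - β)) ^ 2) * γ * L * G ^ 3 * (d : ℝ) * (1 / ε ^ 2 - 1 / G ^ 2) / T :=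
    calc _ = (2 * G ^ 3 * d * (1 / ε - 1 / G) * (β / (1 - β))
          + 2 * γ * L * G ^ 3 * d * ((β / (1 - β)) ^ 2 * ((1 / ε - 1 / G) / ε))) / T := by ring
      _ ≤ (2 * G ^ 3 * d * (1 / ε - 1 / G) * (1 / (1 - β))
          + 2 * γ * L * G ^ 3 * d * ((4 + (β / (1 - β)) ^ 2) * (1 / ε ^ 2 - 1 / G ^ 2))) / T := by
        gcongr
        linarith
      _ = _ := by field_simp
  have t4 : 0 ≤ 8 * G * γ * L ^ 3 * ρ ^ 2 / ε ^ 2 := by positivity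
  linarith

theorem adasam_convergence_general {d N : ℕ}
    (fi : Fin N → EuclideanSpace ℝ (Fin d) → ℝ)
    (f : EuclideanSpace ℝ (Fin d) → ℝ)
    (hfdef : ∀ y, f y = (1 / (N : ℝ)) * ∑ i, fi i y)
    (L G ε ρ β₁ β₂ γ fstar : ℝ)
    (hfi : ∀ i, Differentiable ℝ (fi i))
    (hf : Differentiable ℝ f)
    (hfiG : ∀ i, ∀ y, ∀ j, |gradient (fi i) y j| ≤ G)
    (hL : 0 < L)
    (hfiL : ∀ i, ∀ u v, ‖gradient (fi i) u - gradient (fi i) v‖ ≤ L * ‖u - v‖)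
    (hfL : ∀ u v, ‖gradient f u - gradient f v‖ ≤ L * ‖u - v‖)
    (hlb : ∀ y, fstar ≤ f y)
    (hε : 0 < ε) (hεG : ε ≤ G) (hρ : 0 ≤ ρ)
    (hβ₁ : β₁ ∈ Set.Ico (0 : ℝ) 1) (hβ₂ : β₂ ∈ Set.Icc (0 : ℝ) 1)
    (hγ : 0 < γ) (hγle : γ ≤ ε / (16 * L))
    (x g m v vhat η : ℕ → EuclideanSpace ℝ (Fin d))
    (hsnz : ∀ t, gradient f (x t) ≠ 0)
    (hg : ∀ t, g t = (1 / (N : ℝ)) • ∑ i, gradient (fi i)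
        (x t + (ρ / ‖gradient f (x t)‖) • gradient f (x t)))
    (hm0 : m 0 = (1 - β₁) • g 0)
    (hm : ∀ t, m (t + 1) = β₁ • m t + (1 - β₁) • g (t + 1))
    (hv0 : ∀ j, v 0 j = β₂ * ε ^ 2 + (1 - β₂) * (g 0 j * g 0 j))
    (hv : ∀ t, ∀ j, v (t + 1) j = β₂ * v t j + (1 - β₂) * (g (t + 1) j * g (t + 1) j))
    (hvhat0 : ∀ j, vhat 0 j = max (ε ^ 2) (v 0 j))
    (hvhat : ∀ t, ∀ j, vhat (t + 1) j = max (vhat t j) (v (t + 1) j))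
    (hη : ∀ t, ∀ j, η t j = 1 / Real.sqrt (vhat t j))
    (hx : ∀ t, x (t + 1) = x t - γ • had (m t) (η t))
    (T : ℕ) (hT : 1 ≤ T) :
    (1 / (T : ℝ)) * ∑ t ∈ Finset.range T, ‖gradient f (x t)‖ ^ 2
      ≤ 2 * G * (f (x 0) - fstar) / (γ * T)
        + 45 * G * L ^ 2 * ρ ^ 2 / ε
        + 8 * G * γ * L ^ 3 * ρ ^ 2 / ε ^ 2
        + (2 * G ^ 3 * (d : ℝ) / ((1 - β₁) * T)) * (1 / ε - 1 / G)
        + 2 * (4 + (β₁ / (1 - β₁)) ^ 2) * γ * L * G ^ 3 * (d : ℝ)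
            * (1 / ε ^ 2 - 1 / G ^ 2) / T
        + 6 * γ ^ 2 * L ^ 2 * β₁ ^ 2 * (d : ℝ) * G ^ 3 / ((1 - β₁) ^ 2 * ε ^ 3) := by
  have hG : 0 < G := hε.trans_le hεG
  have hgrad := gradient_avg hfdef hfi
  have hfG : ∀ y j, |gradient f y j| ≤ G := fun y j => by
    rw [hgrad]; exact abs_avg_apply_le hG.le fun i => hfiG i y j
  have hgG : ∀ t j, |g t j| ≤ G := fun t j => by
    rw [hg]; exact abs_avg_apply_le hG.le fun i => hfiG i _ j
  have hηbounds := fun j => amsgrad_stepsize_bounds (v := (v · j)) (vhat := (vhat · j))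
    hβ₂ hε hεG (hgG · j) (hv0 j) (hv · j) (hvhat0 j) (hvhat · j) (hη · j)
  have hsam : ∀ t, ‖g t - gradient f (x t)‖ ≤ L * ρ := fun t => by
    simpa only [← hgrad (x t), ← hg t] using
      norm_avg_gradient_perturbed_sub_le hL.le hρ hfiL (hsnz t) (x t)
  have hLγ : L * γ ≤ ε / 16 := by
    rw [le_div_iff₀ (by positivity)] at hγle; linarith
  linarith [adaptive_momentum_convergence hf hfL hfG hlb hL.le hG hε hβ₁ hγ hLγ hgG hsam
    (fun t j => (hηbounds j).1 t) (fun j => (hηbounds j).2) hm0 hm hx hT,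
    adasam_error_terms_le (d := d) (ρ := ρ) hL hε hεG hβ₁ hγ hT]

/-- Deterministic full-batch form of the main convergence theorem for AdaSAM
(SAM perturbation + momentum + AMSGrad-type adaptive learning rate, run with the
full batch so that the stochastic gradient is exact and `σ² = 0`). -/
theorem adasam_convergence {d N : ℕ} (hd : 1 ≤ d) (hN : 1 ≤ N)
    (fi : Fin N → EuclideanSpace ℝ (Fin d) → ℝ)
    (f : EuclideanSpace ℝ (Fin d) → ℝ)
    (hfdef : ∀ y, f y = (1 / (N : ℝ)) * ∑ i, fi i y)
    (L G ε ρ β₁ β₂ γ fstar : ℝ)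
    (hfi : ∀ i, Differentiable ℝ (fi i))
    (hf : Differentiable ℝ f)
    (hfiG : ∀ i, ∀ y, ∀ j, |gradient (fi i) y j| ≤ G)
    (hL : 0 < L)
    (hfiL : ∀ i, ∀ u v, ‖gradient (fi i) u - gradient (fi i) v‖ ≤ L * ‖u - v‖)
    (hfL : ∀ u v, ‖gradient f u - gradient f v‖ ≤ L * ‖u - v‖)
    (hlb : ∀ y, fstar ≤ f y)
    (hε : 0 < ε) (hεG : ε ≤ G) (hρ : 0 ≤ ρ)
    (hβ₁ : β₁ ∈ Set.Ico (0 : ℝ) 1) (hβ₂ : β₂ ∈ Set.Icc (0 : ℝ) 1)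
    (hγ : 0 < γ) (hγle : γ ≤ ε / (16 * L))
    (x g m v vhat η : ℕ → EuclideanSpace ℝ (Fin d))
    (hsnz : ∀ t, gradient f (x t) ≠ 0)
    (hg : ∀ t, g t = (1 / (N : ℝ)) • ∑ i, gradient (fi i)
        (x t + (ρ / ‖gradient f (x t)‖) • gradient f (x t)))
    (hm0 : m 0 = (1 - β₁) • g 0)
    (hm : ∀ t, m (t + 1) = β₁ • m t + (1 - β₁) • g (t + 1))
    (hv0 : ∀ j, v 0 j = β₂ * ε ^ 2 + (1 - β₂) * (g 0 j * g 0 j))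
    (hv : ∀ t, ∀ j, v (t + 1) j = β₂ * v t j + (1 - β₂) * (g (t + 1) j * g (t + 1) j))
    (hvhat0 : ∀ j, vhat 0 j = max (ε ^ 2) (v 0 j))
    (hvhat : ∀ t, ∀ j, vhat (t + 1) j = max (vhat t j) (v (t + 1) j))
    (hη : ∀ t, ∀ j, η t j = 1 / Real.sqrt (vhat t j))
    (hx : ∀ t, x (t + 1) = x t - γ • had (m t) (η t))
    (T : ℕ) (hT : 1 ≤ T) :
    (1 / (T : ℝ)) * ∑ t ∈ Finset.range T, ‖gradient f (x t)‖ ^ 2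
      ≤ 2 * G * (f (x 0) - fstar) / (γ * T)
        + 45 * G * L ^ 2 * ρ ^ 2 / ε
        + 8 * G * γ * L ^ 3 * ρ ^ 2 / ε ^ 2
        + (2 * G ^ 3 * (d : ℝ) / ((1 - β₁) * T)) * (1 / ε - 1 / G)
        + 2 * (4 + (β₁ / (1 - β₁)) ^ 2) * γ * L * G ^ 3 * (d : ℝ)
            * (1 / ε ^ 2 - 1 / G ^ 2) / T
        + 6 * γ ^ 2 * L ^ 2 * β₁ ^ 2 * (d : ℝ) * G ^ 3 / ((1 - β₁) ^ 2 * ε ^ 3) :=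
  adasam_convergence_general fi f hfdef L G ε ρ β₁ β₂ γ fstar hfi hf hfiG hL hfiL hfL hlb hε hεG hρ
    hβ₁ hβ₂ hγ hγle x g m v vhat η hsnz hg hm0 hm hv0 hv hvhat0 hvhat hη hx T hT
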